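/- Let C₁, C₂ be nonempty closed convex subsets of a finite-dimensional Hilbert space H with C₁ ∩ C₂ ≠ ∅. Define the Douglas–Rachford operator T(z) = z + P_{C₂}(2P_{C₁}(z) − z) − P_{C₁}(z), where P_C denotes metric projection. Then for any initial z₀, the iterates z_{k+1} = T(z_k) converge to a fixed point z* of T, and P_{C₁}(z*) ∈ C₁ ∩ C₂. -/

import Mathlib

/-!
Each metric projection `P` onto a convex set is firmly nonexpansive, i.e. its reflection
`2P - id` is nonexpansive. The Douglas–Rachford operator satisfies `2T - id = R₂ ∘ R₁` for the two
reflections, so `T` is firmly nonexpansive as well, and a point of `C₁ ∩ C₂` is a fixed point of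
`T`. For a firmly nonexpansive map with a fixed point `y` the iterates satisfy
`‖T z - y‖² + ‖T z - z‖² ≤ ‖z - y‖²`: they are Fejér monotone and asymptotically regular. In finite
dimension a cluster point exists, it is a fixed point by continuity, and Fejér monotonicity with
respect to it upgrades subsequential convergence to convergence.
-/

open Filter Topology RealInnerProductSpace Function

section

variable {H : Type*} [NormedAddCommGroup H]

def IsMetricProjection (C : Set H) (P : H → H) : Prop :=
  ∀ z, P z ∈ C ∧ ∀ w ∈ C, ‖z - P z‖ ≤ ‖z - w‖

theorem IsMetricProjection.map_eq_self {C : Set H} {P : H → H} (hP : IsMetricProjection C P)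
    {w : H} (hw : w ∈ C) : P w = w := by
  simpa [sub_eq_zero, eq_comm] using (hP w).2 w hw

variable [InnerProductSpace ℝ H]

def FirmlyNonexpansive (T : H → H) : Prop :=
  ∀ x y, ‖T x - T y‖ ^ 2 ≤ ⟪x - y, T x - T y⟫

namespace IsMetricProjection

variable {C : Set H} {P : H → H}

theorem inner_sub_sub_nonpos (hC : Convex ℝ C) (hP : IsMetricProjection C P) (z : H) {w : H}
    (hw : w ∈ C) : ⟪z - P z, w - P z⟫ ≤ 0 := by
  have : Nonempty C := ⟨⟨P z, (hP z).1⟩⟩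
  refine (norm_eq_iInf_iff_real_inner_le_zero hC (hP z).1).1 (le_antisymm ?_ ?_) w hw
  · exact le_ciInf fun w => (hP z).2 w w.2
  · exact ciInf_le ⟨0, by rintro _ ⟨w, rfl⟩; positivity⟩ (⟨P z, (hP z).1⟩ : C)

theorem firmlyNonexpansive (hC : Convex ℝ C) (hP : IsMetricProjection C P) :
    FirmlyNonexpansive P := by
  intro x y
  have hx := hP.inner_sub_sub_nonpos hC x (hP y).1
  have hy := hP.inner_sub_sub_nonpos hC y (hP x).1
  have hsum : ⟪x - P x, P y - P x⟫ + ⟪y - P y, P x - P y⟫ =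
      ‖P x - P y‖ ^ 2 - ⟪x - y, P x - P y⟫ := by
    rw [← neg_sub (P x) (P y), inner_neg_right, neg_add_eq_sub, ← inner_sub_left,
      ← real_inner_self_eq_norm_sq, ← inner_sub_left]
    congr 1
    abel
  linarith

end IsMetricProjection

theorem firmlyNonexpansive_iff_lipschitzWith_reflection {T : H → H} :
    FirmlyNonexpansive T ↔ LipschitzWith 1 fun x => 2 • T x - x := by
  have key (x y : H) : ‖(2 • T x - x) - (2 • T y - y)‖ ^ 2 =
      ‖x - y‖ ^ 2 + 4 * (‖T x - T y‖ ^ 2 - ⟪x - y, T x - T y⟫) := by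
    rw [show (2 • T x - x) - (2 • T y - y) = (2 : ℝ) • (T x - T y) - (x - y) by module,
      norm_sub_sq_real, norm_smul, inner_smul_left, real_inner_comm]
    norm_num
    ring
  rw [lipschitzWith_iff_dist_le_mul]
  refine forall₂_congr fun x y => ?_
  rw [NNReal.coe_one, one_mul, dist_eq_norm, dist_eq_norm,
    ← sq_le_sq₀ (norm_nonneg _) (norm_nonneg _), key]
  constructor <;> intro h <;> linarith

namespace FirmlyNonexpansive

variable {T : H → H} {y : H}

theorem lipschitzWith_one (hT : FirmlyNonexpansive T) : LipschitzWith 1 T :=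
  LipschitzWith.mk_one fun x y => by
    rw [dist_eq_norm, dist_eq_norm]
    have h := (hT x y).trans (real_inner_le_norm _ _)
    nlinarith [norm_nonneg (T x - T y), norm_nonneg (x - y)]

theorem norm_sub_sq_add_norm_sub_sq_le (hT : FirmlyNonexpansive T) (x : H) (hy : IsFixedPt T y) :
    ‖T x - y‖ ^ 2 + ‖T x - x‖ ^ 2 ≤ ‖x - y‖ ^ 2 := by
  have h := hT x y
  rw [hy.eq] at h
  rw [norm_sub_rev (T x) x, show x - T x = (x - y) - (T x - y) by abel,
    norm_sub_sq_real (x - y)]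
  linarith

theorem antitone_norm_iterate_sub (hT : FirmlyNonexpansive T) (hy : IsFixedPt T y) (z₀ : H) :
    Antitone fun k => ‖T^[k] z₀ - y‖ :=
  antitone_nat_of_succ_le fun k => by
    simpa [iterate_succ_apply', hy.eq] using hT.lipschitzWith_one.norm_sub_le (T^[k] z₀) y

theorem tendsto_apply_iterate_sub_iterate (hT : FirmlyNonexpansive T) (hy : IsFixedPt T y)
    (z₀ : H) : Tendsto (fun k => T (T^[k] z₀) - T^[k] z₀) atTop (𝓝 0) := by
  set d : ℕ → ℝ := fun k => ‖T^[k] z₀ - y‖ ^ 2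
  have hd : Antitone d := fun m n h =>
    pow_le_pow_left₀ (norm_nonneg _) (hT.antitone_norm_iterate_sub hy z₀ h) 2
  have hL := tendsto_atTop_ciInf hd ⟨0, by rintro _ ⟨k, rfl⟩; positivity⟩
  have hgap : Tendsto (fun k => d k - d (k + 1)) atTop (𝓝 0) := by
    simpa using hL.sub (hL.comp (tendsto_add_atTop_nat 1))
  have hsq : Tendsto (fun k => ‖T (T^[k] z₀) - T^[k] z₀‖ ^ 2) atTop (𝓝 0) := by
    refine squeeze_zero (fun k => by positivity) (fun k => ?_) hgap
    have := hT.norm_sub_sq_add_norm_sub_sq_le (T^[k] z₀) hy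
    simp only [d, iterate_succ_apply']
    linarith
  rw [tendsto_zero_iff_norm_tendsto_zero]
  simpa [Real.sqrt_sq (norm_nonneg _)] using hsq.sqrt

theorem exists_isFixedPt_tendsto_iterate [FiniteDimensional ℝ H] (hT : FirmlyNonexpansive T)
    (hy : IsFixedPt T y) (z₀ : H) :
    ∃ z, IsFixedPt T z ∧ Tendsto (fun k => T^[k] z₀) atTop (𝓝 z) := by
  obtain ⟨z, -, φ, hφ, hφz⟩ := (isCompact_closedBall y ‖z₀ - y‖).tendsto_subseq fun k =>
    mem_closedBall_iff_norm.2 (hT.antitone_norm_iterate_sub hy z₀ k.zero_le)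
  have hz : IsFixedPt T z := by
    have h := ((hT.lipschitzWith_one.continuous.tendsto z).comp hφz).sub hφz
    exact sub_eq_zero.1 <| tendsto_nhds_unique h <|
      (hT.tendsto_apply_iterate_sub_iterate hy z₀).comp hφ.tendsto_atTop
  refine ⟨z, hz, tendsto_iff_norm_sub_tendsto_zero.2 ?_⟩
  exact (tendsto_iff_tendsto_subseq_of_antitone (hT.antitone_norm_iterate_sub hz z₀)
    hφ.tendsto_atTop).2 (tendsto_iff_norm_sub_tendsto_zero.1 hφz)

end FirmlyNonexpansive

end

theorem douglas_rachford_convergence_general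
    {H : Type*} [NormedAddCommGroup H] [InnerProductSpace ℝ H]
    [FiniteDimensional ℝ H]
    (C₁ C₂ : Set H)
    (h₁cv : Convex ℝ C₁)
    (h₂cv : Convex ℝ C₂)
    (hint : (C₁ ∩ C₂).Nonempty)
    (P₁ P₂ : H → H)
    (hP₁ : ∀ z, P₁ z ∈ C₁ ∧ ∀ w ∈ C₁, ‖z - P₁ z‖ ≤ ‖z - w‖)
    (hP₂ : ∀ z, P₂ z ∈ C₂ ∧ ∀ w ∈ C₂, ‖z - P₂ z‖ ≤ ‖z - w‖) :
    let T : H → H := fun z => z + P₂ (2 • P₁ z - z) - P₁ z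
    ∀ z₀ : H, ∃ zstar : H,
      T zstar = zstar ∧
      Tendsto (fun k => T^[k] z₀) atTop (𝓝 zstar) ∧
      P₁ zstar ∈ C₁ ∩ C₂ := by
  intro T z₀
  have hR₁ := firmlyNonexpansive_iff_lipschitzWith_reflection.1
    (IsMetricProjection.firmlyNonexpansive h₁cv hP₁)
  have hR₂ := firmlyNonexpansive_iff_lipschitzWith_reflection.1
    (IsMetricProjection.firmlyNonexpansive h₂cv hP₂)
  have hT : FirmlyNonexpansive T := by
    have hRR : (fun z => 2 • T z - z) = (fun x => 2 • P₂ x - x) ∘ (fun x => 2 • P₁ x - x) := by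
      funext z
      simp only [T, comp_apply, two_nsmul]
      abel
    rw [firmlyNonexpansive_iff_lipschitzWith_reflection, hRR]
    simpa using hR₂.comp hR₁
  obtain ⟨y, hy₁, hy₂⟩ := hint
  have hy : IsFixedPt T y := by
    simp only [IsFixedPt, T, IsMetricProjection.map_eq_self hP₁ hy₁, two_nsmul, add_sub_cancel_right,
      IsMetricProjection.map_eq_self hP₂ hy₂]
  obtain ⟨z, hz, hlim⟩ := hT.exists_isFixedPt_tendsto_iterate hy z₀
  have hP₂P₁ : P₂ (2 • P₁ z - z) = P₁ z := by
    have h : z + P₂ (2 • P₁ z - z) - P₁ z = z := hz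
    rwa [add_sub_assoc, add_eq_left, sub_eq_zero] at h
  exact ⟨z, hz, hlim, (hP₁ z).1, hP₂P₁ ▸ (hP₂ _).1⟩

/-- Douglas–Rachford convergence: for nonempty closed convex sets `C₁, C₂`
with nonempty intersection in a finite-dimensional real Hilbert space, the
DR iterates converge to a fixed point `z*` of the DR operator, and
`P_{C₁}(z*) ∈ C₁ ∩ C₂`. The projections are characterized as nearest-point maps. -/
theorem douglas_rachford_convergence
    {H : Type*} [NormedAddCommGroup H] [InnerProductSpace ℝ H]
    [FiniteDimensional ℝ H]
    (C₁ C₂ : Set H)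
    (h₁ne : C₁.Nonempty) (h₁cl : IsClosed C₁) (h₁cv : Convex ℝ C₁)
    (h₂ne : C₂.Nonempty) (h₂cl : IsClosed C₂) (h₂cv : Convex ℝ C₂)
    (hint : (C₁ ∩ C₂).Nonempty)
    (P₁ P₂ : H → H)
    (hP₁ : ∀ z, P₁ z ∈ C₁ ∧ ∀ w ∈ C₁, ‖z - P₁ z‖ ≤ ‖z - w‖)
    (hP₂ : ∀ z, P₂ z ∈ C₂ ∧ ∀ w ∈ C₂, ‖z - P₂ z‖ ≤ ‖z - w‖) :
    let T : H → H := fun z => z + P₂ (2 • P₁ z - z) - P₁ z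
    ∀ z₀ : H, ∃ zstar : H,
      T zstar = zstar ∧
      Tendsto (fun k => T^[k] z₀) atTop (𝓝 zstar) ∧
      P₁ zstar ∈ C₁ ∩ C₂ :=
  douglas_rachford_convergence_general C₁ C₂ h₁cv h₂cv hint P₁ P₂ hP₁ hP₂
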